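/- Let B = {X ∈ ℝ³ : ‖X‖ < r} (r > 0) carry the quadratic response W(X,F) = f(‖X‖²) • (F Fᵀ − 1), and assume f : ℝ → ℝ is strictly monotone on [0,∞) and f(t) ≠ 0 for all t ∈ [0,∞). Then for every X ∈ B the β-fibre of the material groupoid at X, i.e. the set {(Y,F) : Y ∈ B, F ∈ GL(3,ℝ) a material isomorphism from Y to X}, equals the product set {Y ∈ B : ‖Y‖ = ‖X‖} × {F ∈ GL(3,ℝ) : F Fᵀ = 1}, i.e. the sphere of radius ‖X‖ times the orthogonal group O(3). -/

import Mathlib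

open Matrix

/-- `F ∈ GL(3,ℝ)` is a material isomorphism from `X` to `Y` for the
mechanical response `W`: `W (X, G * F) = W (Y, G)` for every `G ∈ GL(3,ℝ)`. -/
def IsMatIso {V : Type*} (W : EuclideanSpace ℝ (Fin 3) → GL (Fin 3) ℝ → V)
    (X Y : EuclideanSpace ℝ (Fin 3)) (F : GL (Fin 3) ℝ) : Prop :=
  ∀ G : GL (Fin 3) ℝ, W X (G * F) = W Y G

/-- The quadratic mechanical response `W(X,F) = f(‖X‖²) • (F Fᵀ − 1)`. -/
noncomputable def Wq (f : ℝ → ℝ) (X : EuclideanSpace ℝ (Fin 3)) (F : GL (Fin 3) ℝ) :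
    Matrix (Fin 3) (Fin 3) ℝ :=
  f (‖X‖ ^ 2) • ((F : Matrix (Fin 3) (Fin 3) ℝ) * (F : Matrix (Fin 3) (Fin 3) ℝ)ᵀ - 1)

/-!
Taking `G = 1` in the defining identity `f(‖Y‖²) • ((GF)(GF)ᵀ - 1) = f(‖X‖²) • (GGᵀ - 1)`
forces `F Fᵀ = 1`, since `f` does not vanish. Once `F` is orthogonal, `(GF)(GF)ᵀ = GGᵀ`, so the
identity reduces to `f(‖Y‖²) = f(‖X‖²)` (take any `G` with `GGᵀ ≠ 1`, e.g. `2 • 1`), and injectivity of `f` on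
`[0,∞)` turns this into `‖Y‖ = ‖X‖`.
-/

section Orthogonal

variable {n R : Type*} [Fintype n] [DecidableEq n]

theorem mul_mul_transpose_mul_of_mul_transpose_eq_one [CommSemiring R] (A : Matrix n n R)
    {B : Matrix n n R} (hB : B * Bᵀ = 1) : A * B * (A * B)ᵀ = A * Aᵀ := by
  rw [transpose_mul, Matrix.mul_assoc, ← Matrix.mul_assoc B, hB, Matrix.one_mul]

theorem exists_GL_mul_transpose_ne_one [Nonempty n] :
    ∃ G : GL n ℝ, (G : Matrix n n ℝ) * (G : Matrix n n ℝ)ᵀ ≠ 1 := by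
  refine ⟨GeneralLinearGroup.scalar n (Units.mk0 2 two_ne_zero), fun h => ?_⟩
  obtain ⟨i⟩ := ‹Nonempty n›
  have := congrFun (congrFun h i) i
  norm_num at this

end Orthogonal

theorem isMatIso_Wq_iff {f : ℝ → ℝ} {X Y : EuclideanSpace ℝ (Fin 3)} {F : GL (Fin 3) ℝ}
    (hY : f (‖Y‖ ^ 2) ≠ 0) :
    IsMatIso (Wq f) Y X F ↔
      (F : Matrix (Fin 3) (Fin 3) ℝ) * (F : Matrix (Fin 3) (Fin 3) ℝ)ᵀ = 1 ∧
        f (‖Y‖ ^ 2) = f (‖X‖ ^ 2) := by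
  constructor
  · intro hiso
    have hF : (F : Matrix (Fin 3) (Fin 3) ℝ) * (F : Matrix (Fin 3) (Fin 3) ℝ)ᵀ = 1 := by
      have h1 := hiso 1
      simp only [Wq, one_mul, Units.val_one, transpose_one, sub_self, smul_zero] at h1
      exact sub_eq_zero.mp ((smul_eq_zero.mp h1).resolve_left hY)
    obtain ⟨G, hG⟩ := exists_GL_mul_transpose_ne_one (n := Fin 3)
    have hGF := hiso G
    rw [Wq, Wq, Units.val_mul, mul_mul_transpose_mul_of_mul_transpose_eq_one _ hF] at hGF
    exact ⟨hF, smul_left_injective ℝ (sub_ne_zero.mpr hG) hGF⟩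
  · rintro ⟨hF, hfXY⟩ G
    rw [Wq, Wq, Units.val_mul, mul_mul_transpose_mul_of_mul_transpose_eq_one _ hF, hfXY]

theorem matGroupoid_betaFibre_general (r : ℝ) (f : ℝ → ℝ)
    (hf : StrictMonoOn f (Set.Ici 0) ∨ StrictAntiOn f (Set.Ici 0))
    (hf0 : ∀ t ∈ Set.Ici (0 : ℝ), f t ≠ 0)
    (X : EuclideanSpace ℝ (Fin 3)) :
    {p : EuclideanSpace ℝ (Fin 3) × GL (Fin 3) ℝ |
        ‖p.1‖ < r ∧ IsMatIso (Wq f) p.1 X p.2} =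
      {Y : EuclideanSpace ℝ (Fin 3) | ‖Y‖ < r ∧ ‖Y‖ = ‖X‖} ×ˢ
        {F : GL (Fin 3) ℝ |
          (F : Matrix (Fin 3) (Fin 3) ℝ) * (F : Matrix (Fin 3) (Fin 3) ℝ)ᵀ = 1} := by
  have hinj : Set.InjOn f (Set.Ici 0) := hf.elim StrictMonoOn.injOn StrictAntiOn.injOn
  have hsq (Z : EuclideanSpace ℝ (Fin 3)) : ‖Z‖ ^ 2 ∈ Set.Ici (0 : ℝ) := Set.mem_Ici.mpr (sq_nonneg _)
  ext ⟨Y, F⟩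
  have hnorm : f (‖Y‖ ^ 2) = f (‖X‖ ^ 2) ↔ ‖Y‖ = ‖X‖ := by
    rw [hinj.eq_iff (hsq Y) (hsq X), sq_eq_sq₀ (norm_nonneg _) (norm_nonneg _)]
  simp only [Set.mem_ofPred_eq, Set.mem_prod, isMatIso_Wq_iff (hf0 _ (hsq Y)), hnorm]
  tauto

/-- If `f` is strictly monotone and nowhere zero on `[0,∞)`, the `β`-fibre of
the material groupoid at `X ∈ B` is the sphere of radius `‖X‖` times `O(3)`. -/
theorem matGroupoid_betaFibre (r : ℝ) (hr : 0 < r) (f : ℝ → ℝ)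
    (hf : StrictMonoOn f (Set.Ici 0) ∨ StrictAntiOn f (Set.Ici 0))
    (hf0 : ∀ t ∈ Set.Ici (0 : ℝ), f t ≠ 0)
    (X : EuclideanSpace ℝ (Fin 3)) (hX : ‖X‖ < r) :
    {p : EuclideanSpace ℝ (Fin 3) × GL (Fin 3) ℝ |
        ‖p.1‖ < r ∧ IsMatIso (Wq f) p.1 X p.2} =
      {Y : EuclideanSpace ℝ (Fin 3) | ‖Y‖ < r ∧ ‖Y‖ = ‖X‖} ×ˢ
        {F : GL (Fin 3) ℝ |
          (F : Matrix (Fin 3) (Fin 3) ℝ) * (F : Matrix (Fin 3) (Fin 3) ℝ)ᵀ = 1} :=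
  matGroupoid_betaFibre_general r f hf hf0 X
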